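/- arXiv:1304.1207 — 8 statements merged into one kernel-verified Lean document; each statement's English description precedes it below -/
import Mathlib

section
/- Let 𝒬 = (Q_ℓ)_{ℓ=1}^L be a partition of the character group Ĝ of a finite abelian group G and let 𝒫 = (P_m)_{m=1}^M = 𝒬̂ be its dual partition of G (identifying the double character group with G via g(χ) = χ(g)). Let K ∈ ℂ^{M×L} be the Krawtchouk matrix of (𝒬, 𝒫), i.e., K_{m,ℓ} = Σ_{χ∈Q_ℓ} χ(g) for any (every) g ∈ P_m. Then for every subgroup C ≤ G, setting A_m = |C ∩ P_m| and B_ℓ = |C^⊥ ∩ Q_ℓ|, the MacWilliams identity B_ℓ = (1/|C|) · Σ_{m=1}^M A_m K_{m,ℓ} holds for all ℓ = 1, …, L. -/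
open Finset
open scoped Classical

variable {G : Type*} [AddCommGroup G] [Fintype G]

/-- The sum `Σ_{g ∈ P_c} χ(g)` of the character `χ` over the block of the partition
(setoid) `P` of `G` indexed by `c`. -/
noncomputable def blockSum (P : Setoid G) (χ : AddChar G ℂ) (c : Quotient P) : ℂ :=
  ∑ g : G, if Quotient.mk P g = c then χ g else 0

/-- The dual partition `P̂` of the character group `Ĝ`:  `χ ∼ χ'` iff the sums of `χ` and of
`χ'` over each block of `P` agree. -/
noncomputable def dualSetoid (P : Setoid G) : Setoid (AddChar G ℂ) :=
  Setoid.ker (blockSum P)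

/-- The sum `Σ_{χ ∈ Q_c} χ(g)` over the block of the dual partition indexed by `c`. -/
noncomputable def dualBlockSum (P : Setoid G) (g : G) (c : Quotient (dualSetoid P)) : ℂ :=
  ∑ᶠ χ : AddChar G ℂ, if Quotient.mk (dualSetoid P) χ = c then χ g else 0

/-- The bidual partition `P̂̂`, viewed as a partition of `G` by identifying the double
character group with `G` via `g(χ) = χ(g)`. -/
noncomputable def bidualSetoid (P : Setoid G) : Setoid G :=
  Setoid.ker (dualBlockSum P)

/-- The dual (on `G`) of a partition `Q` of the character group `Ĝ`, identifying the double
character group with `G` via `g(χ) = χ(g)`:  `g ∼ g'` iff the sums over each block of `Q`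
of the evaluations at `g` and at `g'` agree. -/
noncomputable def codualSetoid (Q : Setoid (AddChar G ℂ)) : Setoid G :=
  Setoid.ker fun g (c : Quotient Q) =>
    ∑ᶠ χ : AddChar G ℂ, if Quotient.mk Q χ = c then χ g else 0

/-!
Evaluate `Σ_{g ∈ C} Σ_{χ ∈ Q_ℓ} χ(g)` in two ways. Grouping `g` by the block of `P` containing
it gives `Σ_m A_m K_{m,ℓ}`, since the inner sum equals `K_{m,ℓ}` on `P_m`. Summing over `g`
first, the orthogonality relation `Σ_{g ∈ C} χ(g) = |C| [χ ∈ C^⊥]` gives `|C| B_ℓ`.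
-/

theorem Finset.sum_card_fiber_mul {ι κ R : Type*} [Fintype κ] [DecidableEq κ] [CommSemiring R]
    (s : Finset ι) (π : ι → κ) (F : κ → R) :
    ∑ k, (#{i ∈ s | π i = k} : R) * F k = ∑ i ∈ s, F (π i) := by
  rw [← sum_fiberwise' s π F]
  simp only [sum_const, nsmul_eq_mul]

namespace AddChar

variable {R : Type*} [CommSemiring R] [IsDomain R]

theorem sum_mem_addSubgroup_eq_ite (C : AddSubgroup G) (χ : AddChar G R) :
    ∑ g with g ∈ C, χ g = if ∀ h ∈ C, χ h = 1 then (Nat.card C : R) else 0 := by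
  have hres : χ.compAddMonoidHom C.subtype = 0 ↔ ∀ h ∈ C, χ h = 1 := by
    simp [eq_zero_iff]
  rw [sum_subtype _ (fun x => mem_filter_univ x) χ]
  exact (sum_eq_ite (χ.compAddMonoidHom C.subtype)).trans
    (if_congr hres (by rw [Nat.card_eq_fintype_card]) rfl)

theorem sum_mem_addSubgroup_sum_eq [Fintype (AddChar G R)] (C : AddSubgroup G)
    (S : Finset (AddChar G R)) :
    ∑ g with g ∈ C, ∑ χ ∈ S, χ g = Nat.card C * #{χ ∈ S | ∀ h ∈ C, χ h = 1} := by
  rw [sum_comm]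
  simp only [sum_mem_addSubgroup_eq_ite, sum_ite, sum_const_zero, add_zero, sum_const,
    nsmul_eq_mul, mul_comm]

end AddChar

theorem macwilliams_partition_enumerator_general
    (Q : Setoid (AddChar G ℂ)) (P : Setoid G)
    (K : Quotient P → Quotient Q → ℂ)
    (hK : ∀ (g : G) (ℓ : Quotient Q),
      K (Quotient.mk P g) ℓ = ∑ᶠ χ : AddChar G ℂ, if Quotient.mk Q χ = ℓ then χ g else 0)
    (C : AddSubgroup G) (ℓ : Quotient Q) :
    (Nat.card {χ : AddChar G ℂ // (∀ h ∈ C, χ h = 1) ∧ Quotient.mk Q χ = ℓ} : ℂ) =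
      (Nat.card C : ℂ)⁻¹ *
        ∑ᶠ m : Quotient P,
          (Nat.card {g : G // g ∈ C ∧ Quotient.mk P g = m} : ℂ) * K m ℓ := by
  have := Fintype.ofFinite (AddChar G ℂ)
  have hC : (Nat.card C : ℂ) ≠ 0 := Nat.cast_ne_zero.2 Nat.card_pos.ne'
  have hA (m : Quotient P) :
      Nat.card {g : G // g ∈ C ∧ Quotient.mk P g = m} =
        #{g ∈ {g | g ∈ C} | Quotient.mk P g = m} := by
    rw [filter_filter, Nat.card_eq_fintype_card, Fintype.card_subtype]
  have hB : Nat.card {χ : AddChar G ℂ // (∀ h ∈ C, χ h = 1) ∧ Quotient.mk Q χ = ℓ} =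
      #{χ ∈ {χ | Quotient.mk Q χ = ℓ} | ∀ h ∈ C, χ h = 1} := by
    rw [filter_filter, Nat.card_eq_fintype_card, Fintype.card_subtype]
    simp only [and_comm]
  have hKsum (g : G) : K (Quotient.mk P g) ℓ = ∑ χ with Quotient.mk Q χ = ℓ, χ g := by
    rw [hK, finsum_eq_sum_of_fintype, sum_filter]
  rw [finsum_eq_sum_of_fintype, eq_inv_mul_iff_mul_eq₀ hC]
  simp only [hA, hB]
  rw [sum_card_fiber_mul, sum_congr rfl fun g _ => hKsum g, AddChar.sum_mem_addSubgroup_sum_eq]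

/-- **MacWilliams identity for partition enumerators.**  If `Q` is a partition of `Ĝ` and
`P = Q̂` is its dual partition of `G`, `K` is the Krawtchouk matrix of `(Q, P)`, and `C ≤ G`
is a code with dual code `C^⊥ = {χ : χ(h) = 1 ∀ h ∈ C}`, then with `A_m = |C ∩ P_m|` and
`B_ℓ = |C^⊥ ∩ Q_ℓ|` one has `B_ℓ = |C|⁻¹ Σ_m A_m K_{m,ℓ}`. -/
theorem macwilliams_partition_enumerator
    (Q : Setoid (AddChar G ℂ)) (P : Setoid G) (hP : P = codualSetoid Q)
    (K : Quotient P → Quotient Q → ℂ)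
    (hK : ∀ (g : G) (ℓ : Quotient Q),
      K (Quotient.mk P g) ℓ = ∑ᶠ χ : AddChar G ℂ, if Quotient.mk Q χ = ℓ then χ g else 0)
    (C : AddSubgroup G) (ℓ : Quotient Q) :
    (Nat.card {χ : AddChar G ℂ // (∀ h ∈ C, χ h = 1) ∧ Quotient.mk Q χ = ℓ} : ℂ) =
      (Nat.card C : ℂ)⁻¹ *
        ∑ᶠ m : Quotient P,
          (Nat.card {g : G // g ∈ C ∧ Quotient.mk P g = m} : ℂ) * K m ℓ :=
  macwilliams_partition_enumerator_general Q P K hK C ℓ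
end

section
/- For every partition 𝒫 of a finite abelian group G, the number of blocks of 𝒫 is at most the number of blocks of its dual partition 𝒫̂ of the character group Ĝ, i.e., |𝒫| ≤ |𝒫̂|. -/
/-! The characters span all functions `G → ℂ`, so a function on `G` that pairs to zero with
every character vanishes. For each block `c` of `P`, `⟦χ⟧ ↦ Σ_{g ∈ P_c} χ(g)` is a well-defined
function on the dual blocks, and these functions are linearly independent: the combination
`Σ_c a_c Σ_{g ∈ P_c} χ(g)` is the pairing of `χ` with `g ↦ a_{[g]}`. So there are at most as
many blocks of `P` as the dimension of the functions on the dual blocks. -/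

open Finset
open scoped Classical

variable {G : Type*} [AddCommGroup G] [Fintype G]

lemma AddChar.eq_zero_of_forall_dotProduct_eq_zero {f : G → ℂ}
    (h : ∀ ψ : AddChar G ℂ, f ⬝ᵥ ψ = 0) : f = 0 := by
  have hdual : dotProductEquiv ℂ G f = 0 :=
    (AddChar.complexBasis G).ext fun ψ => by simpa [AddChar.complexBasis_apply] using h ψ
  simpa using hdual

lemma sum_mul_blockSum (P : Setoid G) (a : Quotient P → ℂ) (χ : AddChar G ℂ) :
    ∑ c, a c * blockSum P χ c = (fun g => a (Quotient.mk P g)) ⬝ᵥ χ := by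
  simp only [blockSum, Finset.mul_sum, mul_ite, mul_zero]
  rw [Finset.sum_comm]
  simp [dotProduct]

noncomputable def dualBlockFun (P : Setoid G) (c : Quotient P) : Quotient (dualSetoid P) → ℂ :=
  Quotient.lift (blockSum P · c) fun _ _ h => congrFun h c

lemma linearIndependent_dualBlockFun (P : Setoid G) :
    LinearIndependent ℂ (dualBlockFun P) := by
  rw [Fintype.linearIndependent_iff]
  intro a ha
  have hpull : (fun g => a (Quotient.mk P g)) = 0 :=
    AddChar.eq_zero_of_forall_dotProduct_eq_zero fun χ => by
      simpa [sum_mul_blockSum, dualBlockFun] using congrFun ha (Quotient.mk _ χ)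
  exact Quotient.ind (congrFun hpull)

/-- The number of blocks of a partition `P` of `G` is at most the number of blocks of its
dual partition `P̂` of the character group `Ĝ`. -/
theorem card_blocks_le_card_blocks_dual (P : Setoid G) :
    Nat.card (Quotient P) ≤ Nat.card (Quotient (dualSetoid P)) := by
  have : Fintype (Quotient (dualSetoid P)) := Fintype.ofFinite _
  calc Nat.card (Quotient P) = Fintype.card (Quotient P) := Nat.card_eq_fintype_card
    _ ≤ Module.finrank ℂ (Quotient (dualSetoid P) → ℂ) :=
      (linearIndependent_dualBlockFun P).fintype_card_le_finrank
    _ = Nat.card (Quotient (dualSetoid P)) := by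
      rw [Module.finrank_pi, Nat.card_eq_fintype_card]
end

section
/- For every partition 𝒫 of a finite abelian group G, the bidual partition 𝒫̂̂ (the dual of the dual partition 𝒫̂, viewed as a partition of G by identifying the double character group with G via g(χ) = χ(g)) is finer than 𝒫, i.e., 𝒫̂̂ ≤ 𝒫. -/
/-!
Fourier inversion writes `|G| · 1_B`, for a block `B` of `P`, as `∑_χ conj (∑_{h ∈ B} χ h) · χ`.
The coefficient of `χ` only depends on the block sums of `χ`, i.e. on the class of `χ` in the
dual partition, so grouping the characters by these classes expresses `|G| · 1_B (x)` through the
dual block sums `∑_{χ ∈ Q} χ x` alone. Hence two elements with the same dual block sums lie in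
the same blocks of `P`.
-/

open Finset
open scoped Classical

variable {G : Type*} [AddCommGroup G] [Fintype G]

open ComplexConjugate

lemma sum_conj_sum_mul_apply_eq_ite {α : Type*} [AddCommGroup α] [Fintype α] (s : Finset α)
    (x : α) :
    ∑ ψ : AddChar α ℂ, conj (∑ h ∈ s, ψ h) * ψ x = if x ∈ s then (Fintype.card α : ℂ) else 0 := by
  calc ∑ ψ : AddChar α ℂ, conj (∑ h ∈ s, ψ h) * ψ x
      = ∑ h ∈ s, ∑ ψ : AddChar α ℂ, ψ (x - h) := by
        simp only [map_sum, Finset.sum_mul, ← AddChar.map_neg_eq_conj, ← AddChar.map_add_eq_mul,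
          neg_add_eq_sub]
        exact Finset.sum_comm
    _ = ∑ h ∈ s, if x = h then (Fintype.card α : ℂ) else 0 := by
        simp only [AddChar.sum_apply_eq_ite, sub_eq_zero]
    _ = if x ∈ s then (Fintype.card α : ℂ) else 0 := Finset.sum_ite_eq s x _

lemma blockSum_eq_sum_filter (P : Setoid G) (χ : AddChar G ℂ) (c : Quotient P) :
    blockSum P χ c = ∑ g ∈ univ.filter (fun g => Quotient.mk P g = c), χ g :=
  (Finset.sum_filter _ _).symm

lemma sum_mul_apply_eq_sum_mul_dualBlockSum (P : Setoid G) (F : Quotient (dualSetoid P) → ℂ)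
    (x : G) :
    ∑ χ : AddChar G ℂ, F (Quotient.mk _ χ) * χ x = ∑ d, F d * dualBlockSum P x d := by
  simp only [dualBlockSum, finsum_eq_sum_of_fintype, Finset.mul_sum, mul_ite, mul_zero]
  rw [Finset.sum_comm]
  refine Finset.sum_congr rfl fun χ _ => ?_
  rw [Finset.sum_ite_eq, if_pos (Finset.mem_univ _)]

lemma exists_ite_mk_eq_sum_mul_dualBlockSum (P : Setoid G) (c : Quotient P) :
    ∃ F : Quotient (dualSetoid P) → ℂ, ∀ x : G,
      (if Quotient.mk P x = c then (Fintype.card G : ℂ) else 0) =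
        ∑ d, F d * dualBlockSum P x d := by
  refine ⟨Quotient.lift (fun χ => conj (blockSum P χ c)) fun _ _ h => ?_, fun x => ?_⟩
  · exact congrArg (fun f => conj (f c)) h
  · rw [← sum_mul_apply_eq_sum_mul_dualBlockSum]
    simp only [Quotient.lift_mk, blockSum_eq_sum_filter, sum_conj_sum_mul_apply_eq_ite]
    simp

/-- The bidual partition `P̂̂` is finer than `P`:  any two elements of `G` that are
equivalent for `P̂̂` are equivalent for `P` (i.e. every block of `P̂̂` is contained in a
block of `P`). -/
theorem bidual_finer (P : Setoid G) : bidualSetoid P ≤ P := by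
  intro g x hgx
  have hdual : dualBlockSum P g = dualBlockSum P x := hgx
  obtain ⟨F, hF⟩ := exists_ite_mk_eq_sum_mul_dualBlockSum P (Quotient.mk P g)
  have h := hF g
  rw [if_pos rfl, hdual, ← hF] at h
  split_ifs at h with hx
  · exact Quotient.exact hx.symm
  · exact absurd h (Nat.cast_ne_zero.2 Fintype.card_ne_zero)
end

section
/- A partition 𝒫 of a finite abelian group G is Fourier-reflexive (i.e., 𝒫̂̂ = 𝒫) if and only if |𝒫| = |𝒫̂|, that is, if and only if 𝒫 and its dual partition 𝒫̂ have the same number of blocks. -/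
open Finset
open scoped Classical

variable {G : Type*} [AddCommGroup G] [Fintype G]

/-!
Let `B` be the `Ĝ × P` matrix of block sums and `D` the `G × P̂` matrix of dual block sums.
Orthogonality of characters shows that the rows of `B` span `ℂ^P`, so `B` has at least `|P|`
distinct rows: `|P| ≤ |P̂|`; in the same way `|P̂| ≤ |P̂̂|`. It also gives
`Σ_c B(c, m) conj D(g, c) = |G| [g ∈ P_m]`, so the row `D(g, ·)` determines the block of `g`,
i.e. `P̂̂` refines `P`. If `|P| = |P̂|`, the distinct rows of `B` form a basis of `ℂ^P`, so
`D(g, ·)` is in turn determined by the block of `g`, and `P̂̂ = P`.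
-/

open ComplexConjugate Submodule

section Span

variable {α ι K : Type*} [Fintype α] [Fintype ι] [Field K]

theorem top_le_span_range_of_sum_mul_eq_ite [DecidableEq ι] (f : α → ι → K) {c : K}
    (hc : c ≠ 0) (w : ι → α → K) (hw : ∀ i j, ∑ a, w i a * f a j = if i = j then c else 0) :
    ⊤ ≤ span K (Set.range f) := by
  rw [← (Pi.basisFun K ι).span_eq, span_le]
  rintro _ ⟨i, rfl⟩
  have hi : Pi.basisFun K ι i = c⁻¹ • ∑ a, w i a • f a := by
    ext j
    simp [Finset.sum_apply, hw, Pi.single_apply, hc, eq_comm]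
  rw [hi]
  exact smul_mem _ _ (sum_mem fun a _ => smul_mem _ _ (subset_span ⟨a, rfl⟩))

theorem Setoid.card_le_card_quotient_ker_of_top_le_span {f : α → ι → K}
    (hf : ⊤ ≤ span K (Set.range f)) : Fintype.card ι ≤ Nat.card (Quotient (Setoid.ker f)) := by
  rw [Nat.card_eq_fintype_card]
  calc Fintype.card ι = Module.finrank K (ι → K) :=
        (Module.finrank_fintype_fun_eq_card K).symm
    _ = Module.finrank K (span K (Set.range (Setoid.kerLift f))) := by
      rw [Setoid.range_kerLift_eq_range, top_unique hf, finrank_top]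
    _ ≤ _ := finrank_range_le_card _

theorem Setoid.linearIndependent_kerLift_of_card_eq {f : α → ι → K}
    (hf : ⊤ ≤ span K (Set.range f))
    (hcard : Nat.card (Quotient (Setoid.ker f)) = Fintype.card ι) :
    LinearIndependent K (Setoid.kerLift f) :=
  linearIndependent_of_top_le_span_of_card_eq_finrank (by rwa [Setoid.range_kerLift_eq_range])
    (by rw [← Nat.card_eq_fintype_card, hcard, Module.finrank_fintype_fun_eq_card])

end Span

theorem Finset.sum_mul_sum_ite_eq {α β R : Type*} [Fintype α] [Fintype β] [DecidableEq β]
    [CommSemiring R] (f : α → β) (F : β → R) (x : α → R) :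
    ∑ b, F b * ∑ a, (if f a = b then x a else 0) = ∑ a, F (f a) * x a := by
  simp_rw [mul_sum, mul_ite, mul_zero]
  rw [sum_comm]
  simp

theorem AddChar.sum_apply_mul_conj_eq_ite (g h : G) :
    ∑ χ : AddChar G ℂ, χ h * conj (χ g) = if h = g then (Fintype.card G : ℂ) else 0 := by
  simp_rw [← map_neg_eq_conj, ← map_add_eq_mul, ← sub_eq_add_neg, sum_apply_eq_ite,
    sub_eq_zero]

theorem AddChar.sum_mul_conj_eq_ite (χ ψ : AddChar G ℂ) :
    ∑ g, χ g * conj (ψ g) = if χ = ψ then (Fintype.card G : ℂ) else 0 := by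
  simp_rw [← map_neg_eq_conj, ← div_apply, sum_eq_ite, ← one_eq_zero, div_eq_one]

section Partition

variable (P : Setoid G)

theorem dualBlockSum_eq_sum (g : G) (c : Quotient (dualSetoid P)) :
    dualBlockSum P g c =
      ∑ χ : AddChar G ℂ, if Quotient.mk (dualSetoid P) χ = c then χ g else 0 :=
  finsum_eq_sum_of_fintype _

theorem sum_blockSum_mul_conj (g : G) (m : Quotient P) :
    ∑ χ : AddChar G ℂ, blockSum P χ m * conj (χ g) =
      if Quotient.mk P g = m then (Fintype.card G : ℂ) else 0 := by
  simp only [blockSum, sum_mul, ite_mul, zero_mul]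
  rw [sum_comm]
  simp_rw [sum_ite_irrel, sum_const_zero, AddChar.sum_apply_mul_conj_eq_ite]
  rw [Fintype.sum_eq_single g fun h hh => by simp [hh]]
  simp

theorem sum_conj_mul_dualBlockSum (ψ : AddChar G ℂ) (c : Quotient (dualSetoid P)) :
    ∑ g, conj (ψ g) * dualBlockSum P g c =
      if Quotient.mk (dualSetoid P) ψ = c then (Fintype.card G : ℂ) else 0 := by
  simp_rw [dualBlockSum_eq_sum, mul_sum, mul_ite, mul_zero]
  rw [sum_comm]
  simp_rw [sum_ite_irrel, sum_const_zero, mul_comm (conj _), AddChar.sum_mul_conj_eq_ite]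
  rw [Fintype.sum_eq_single ψ fun χ hχ => by simp [hχ]]
  simp

theorem sum_kerLift_blockSum_mul_conj_dualBlockSum (g : G) (m : Quotient P) :
    ∑ c : Quotient (dualSetoid P), Setoid.kerLift (blockSum P) c m * conj (dualBlockSum P g c) =
      if Quotient.mk P g = m then (Fintype.card G : ℂ) else 0 := by
  simp_rw [dualBlockSum_eq_sum, map_sum, apply_ite conj, map_zero,
    sum_mul_sum_ite_eq (Quotient.mk (dualSetoid P))]
  exact sum_blockSum_mul_conj P g m

theorem top_le_span_range_blockSum : ⊤ ≤ span ℂ (Set.range (blockSum P)) :=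
  top_le_span_range_of_sum_mul_eq_ite _ (c := (Fintype.card G : ℂ)) (by simp)
    (fun m χ => conj (χ m.out)) fun m m' => by
      simp_rw [mul_comm (conj _), sum_blockSum_mul_conj, Quotient.out_eq]

theorem top_le_span_range_dualBlockSum : ⊤ ≤ span ℂ (Set.range (dualBlockSum P)) :=
  top_le_span_range_of_sum_mul_eq_ite _ (c := (Fintype.card G : ℂ)) (by simp)
    (fun c g => conj (c.out g)) fun c c' => by
      simp_rw [sum_conj_mul_dualBlockSum, Quotient.out_eq]

theorem card_quotient_le_card_dualSetoid :
    Nat.card (Quotient P) ≤ Nat.card (Quotient (dualSetoid P)) := by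
  rw [Nat.card_eq_fintype_card]
  exact Setoid.card_le_card_quotient_ker_of_top_le_span (top_le_span_range_blockSum P)

theorem card_dualSetoid_le_card_bidualSetoid :
    Nat.card (Quotient (dualSetoid P)) ≤ Nat.card (Quotient (bidualSetoid P)) := by
  rw [Nat.card_eq_fintype_card]
  exact Setoid.card_le_card_quotient_ker_of_top_le_span (top_le_span_range_dualBlockSum P)

theorem bidualSetoid_le : bidualSetoid P ≤ P := by
  intro g g' (h : dualBlockSum P g = dualBlockSum P g')
  have hg := sum_kerLift_blockSum_mul_conj_dualBlockSum P g (Quotient.mk P g')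
  rw [h, sum_kerLift_blockSum_mul_conj_dualBlockSum, if_pos rfl] at hg
  by_contra hne
  rw [if_neg fun h => hne (Quotient.exact h)] at hg
  exact Nat.cast_ne_zero.2 Fintype.card_ne_zero hg

theorem le_bidualSetoid_of_card_eq
    (h : Nat.card (Quotient P) = Nat.card (Quotient (dualSetoid P))) : P ≤ bidualSetoid P := by
  intro g g' hgg'
  have hind : LinearIndependent ℂ (ι := Quotient (dualSetoid P)) (Setoid.kerLift (blockSum P)) :=
    Setoid.linearIndependent_kerLift_of_card_eq (top_le_span_range_blockSum P)
      (by rw [← Nat.card_eq_fintype_card]; exact h.symm)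
  have hconj : ∀ c, conj (dualBlockSum P g c) = conj (dualBlockSum P g' c) := by
    refine Fintype.linearIndependent_iffₛ.1 hind _ _ (funext fun m => ?_)
    simp_rw [Finset.sum_apply, Pi.smul_apply, smul_eq_mul, mul_comm (conj _),
      sum_kerLift_blockSum_mul_conj_dualBlockSum, Quotient.sound hgg']
  exact funext fun c => (starRingEnd ℂ).injective (hconj c)

end Partition

/-- A partition `P` of `G` is Fourier-reflexive (`P̂̂ = P`) if and only if `P` and its dual
partition `P̂` have the same number of blocks. -/
theorem reflexive_iff_card_blocks_eq (P : Setoid G) :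
    bidualSetoid P = P ↔ Nat.card (Quotient P) = Nat.card (Quotient (dualSetoid P)) := by
  refine ⟨fun h => (card_quotient_le_card_dualSetoid P).antisymm ?_,
    fun h => (bidualSetoid_le P).antisymm (le_bidualSetoid_of_card_eq P h)⟩
  calc Nat.card (Quotient (dualSetoid P)) ≤ Nat.card (Quotient (bidualSetoid P)) :=
        card_dualSetoid_le_card_bidualSetoid P
    _ = Nat.card (Quotient P) := by rw [h]
end

section
/- Let 𝒫 = (P_m)_{m=1}^M be a partition of a finite abelian group G, let 𝒫̂ = (P'_ℓ)_{ℓ=1}^L be its dual partition of Ĝ, and let 𝒫̂̂ = (P''_r)_{r=1}^R be the bidual partition of G. Let K ∈ ℂ^{L×M} be the Krawtchouk matrix of (𝒫, 𝒫̂), i.e., K_{ℓ,m} = Σ_{g∈P_m} χ(g) for any χ ∈ P'_ℓ, and let K' ∈ ℂ^{R×L} be the Krawtchouk matrix of (𝒫̂, 𝒫̂̂), i.e., K'_{r,ℓ} = Σ_{χ∈P'_ℓ} χ(g) for any g ∈ P''_r. Then (K'K)_{r,m} = |G| if −P''_r ⊆ P_m, and (K'K)_{r,m} = 0 otherwise.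 -/
/-!
Since `K` and `K'` are block sums of characters, `(K'K)_{r,m}` for `r` the block of `g` unfolds to
`Σ_χ χ(g) Σ_{h ∈ P_m} χ(h) = Σ_{h ∈ P_m} Σ_χ χ(g + h)`, and orthogonality of characters makes
this `|G|` if `-g ∈ P_m` and `0` otherwise. As the left side only depends on the bidual block of
`g`, so does whether `-g ∈ P_m`; hence `-g ∈ P_m` for one `g ∈ P''_r` iff `-P''_r ⊆ P_m`.
-/

open Finset
open scoped Classical

variable {G : Type*} [AddCommGroup G] [Fintype G]

theorem finsum_quotient_finsum_ite_mul {α R : Type*} [Fintype α] [CommSemiring R]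
    (s : Setoid α) (a : α → R) (f : Quotient s → R) :
    (∑ᶠ c : Quotient s, (∑ᶠ x : α, if Quotient.mk s x = c then a x else 0) * f c) =
      ∑ x, a x * f (Quotient.mk s x) := by
  simp_rw [finsum_eq_sum_of_fintype, sum_mul, ite_mul, zero_mul]
  rw [sum_comm]
  simp only [sum_ite_eq, mem_univ, if_true]

theorem sum_addChar_mul_blockSum (P : Setoid G) (g : G) (m : Quotient P) :
    ∑ χ : AddChar G ℂ, χ g * blockSum P χ m =
      if Quotient.mk P (-g) = m then (Fintype.card G : ℂ) else 0 := by
  have orthogonality (h : G) :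
      ∑ χ : AddChar G ℂ, χ g * χ h = if h = -g then (Fintype.card G : ℂ) else 0 := by
    simp_rw [← AddChar.map_add_eq_mul, AddChar.sum_apply_eq_ite, eq_neg_iff_add_eq_zero,
      add_comm h]
  simp_rw [blockSum, mul_sum, mul_ite, mul_zero]
  rw [sum_comm]
  simp_rw [sum_ite_irrel, orthogonality, sum_const_zero]
  rw [Fintype.sum_eq_single (-g) fun h hh => by simp only [hh, if_false, ite_self]]
  simp only [if_true]

noncomputable def krawtchouk (P : Setoid G) (ℓ : Quotient (dualSetoid P)) (m : Quotient P) : ℂ :=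
  Quotient.lift (fun χ => blockSum P χ m) (fun _ _ h => congrFun h m) ℓ

@[simp]
theorem krawtchouk_mk (P : Setoid G) (χ : AddChar G ℂ) (m : Quotient P) :
    krawtchouk P (Quotient.mk _ χ) m = blockSum P χ m :=
  rfl

theorem finsum_dualBlockSum_mul_krawtchouk (P : Setoid G) (g : G) (m : Quotient P) :
    (∑ᶠ ℓ, dualBlockSum P g ℓ * krawtchouk P ℓ m) =
      if Quotient.mk P (-g) = m then (Fintype.card G : ℂ) else 0 := by
  simp only [dualBlockSum, finsum_quotient_finsum_ite_mul, krawtchouk_mk,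
    sum_addChar_mul_blockSum]

theorem mk_neg_eq_of_bidualSetoid (P : Setoid G) {g g' : G} (h : bidualSetoid P g g') :
    Quotient.mk P (-g) = Quotient.mk P (-g') := by
  have hrow := finsum_dualBlockSum_mul_krawtchouk P g (Quotient.mk P (-g'))
  rw [show dualBlockSum P g = dualBlockSum P g' from h,
    finsum_dualBlockSum_mul_krawtchouk, if_pos rfl] at hrow
  by_contra hne
  rw [if_neg hne] at hrow
  exact Nat.cast_ne_zero.mpr Fintype.card_ne_zero hrow

/-- Let `K` be the Krawtchouk matrix of `(P, P̂)` and `K'` the Krawtchouk matrix of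
`(P̂, P̂̂)`.  Then `(K'K)_{r,m} = |G|` if `-P''_r ⊆ P_m` and `(K'K)_{r,m} = 0` otherwise. -/
theorem krawtchouk_product (P : Setoid G)
    (K : Quotient (dualSetoid P) → Quotient P → ℂ)
    (hK : ∀ (χ : AddChar G ℂ) (m : Quotient P),
      K (Quotient.mk (dualSetoid P) χ) m = blockSum P χ m)
    (K' : Quotient (bidualSetoid P) → Quotient (dualSetoid P) → ℂ)
    (hK' : ∀ (g : G) (ℓ : Quotient (dualSetoid P)),
      K' (Quotient.mk (bidualSetoid P) g) ℓ = dualBlockSum P g ℓ)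
    (r : Quotient (bidualSetoid P)) (m : Quotient P) :
    (∑ᶠ ℓ : Quotient (dualSetoid P), K' r ℓ * K ℓ m) =
      if ∀ g : G, Quotient.mk (bidualSetoid P) g = r → Quotient.mk P (-g) = m then
        (Nat.card G : ℂ)
      else 0 := by
  obtain ⟨g₀, rfl⟩ := Quotient.exists_rep r
  have hK_eq : K = krawtchouk P := funext fun ℓ => funext fun m' =>
    Quotient.inductionOn ℓ fun χ => hK χ m'
  simp_rw [hK', hK_eq, finsum_dualBlockSum_mul_krawtchouk, Nat.card_eq_fintype_card]
  refine if_congr ⟨fun h g hg => ?_, fun h => h g₀ rfl⟩ rfl rfl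
  exact (mk_neg_eq_of_bidualSetoid P (Quotient.exact hg)).trans h
end

section
/- Let 𝒫 = (P_m)_{m=1}^M be a Fourier-reflexive partition of a finite abelian group G, so that the bidual partition 𝒫̂̂ has the same blocks P_1, …, P_M. Let K ∈ ℂ^{L×M} be the Krawtchouk matrix of (𝒫, 𝒫̂) and K' ∈ ℂ^{M×L} the Krawtchouk matrix of (𝒫̂, 𝒫̂̂ = 𝒫). Then for each block P_r of 𝒫, the set −P_r is again a block of 𝒫, and K'K = |G| · Π, where Π ∈ ℂ^{M×M} is the permutation matrix with Π_{r,m} = 1 exactly when −P_r = P_m; in particular, after suitable reordering of the blocks, K'K = |G| · I_M. -/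
open Finset
open scoped Classical

variable {G : Type*} [AddCommGroup G] [Fintype G]

/-!
Negating a character conjugates its values, so the dual block sums of `-g` are the complex
conjugates of those of `g`; hence the bidual partition, and with it every Fourier-reflexive
partition, is closed under negation. The matrix entry `(K'K)_{[g],m}` unfolds to
`Σ_χ χ(g) Σ_{h ∈ P_m} χ(h) = Σ_{h ∈ P_m} Σ_χ χ(g + h)`, and character orthogonality leaves
`|G|` exactly when `-g ∈ P_m`.
-/

lemma dualBlockSum_neg (P : Setoid G) (g : G) (ℓ : Quotient (dualSetoid P)) :
    dualBlockSum P (-g) ℓ = starRingEnd ℂ (dualBlockSum P g ℓ) := by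
  simp only [dualBlockSum, finsum_eq_sum_of_fintype, map_sum, apply_ite (starRingEnd ℂ),
    AddChar.map_neg_eq_conj, map_zero]

lemma bidualSetoid_neg {P : Setoid G} {a b : G} (h : bidualSetoid P a b) :
    bidualSetoid P (-a) (-b) := by
  change dualBlockSum P a = dualBlockSum P b at h
  change dualBlockSum P (-a) = dualBlockSum P (-b)
  ext ℓ
  rw [dualBlockSum_neg, dualBlockSum_neg, h]

lemma setOf_mk_eq_iff {α : Type*} (s : Setoid α) (m m' : Quotient s) :
    {x : α | Quotient.mk s x = m} = {x | Quotient.mk s x = m'} ↔ m = m' := by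
  refine ⟨fun h => ?_, fun h => h ▸ rfl⟩
  obtain ⟨a, rfl⟩ := Quotient.exists_rep m
  exact (Set.ext_iff.mp h a).mp rfl

lemma neg_block_eq {α : Type*} [InvolutiveNeg α] {s : Setoid α}
    (hneg : ∀ {a b : α}, s a b → s (-a) (-b)) (a₀ : α) :
    {x : α | ∃ a, Quotient.mk s a = Quotient.mk s a₀ ∧ x = -a} =
      {x | Quotient.mk s x = Quotient.mk s (-a₀)} := by
  ext x
  constructor
  · rintro ⟨a, ha, rfl⟩
    exact Quotient.sound (hneg (Quotient.exact ha))
  · intro hx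
    refine ⟨-x, Quotient.sound ?_, (neg_neg x).symm⟩
    simpa using hneg (Quotient.exact hx)

lemma sum_dualBlockSum_mul (P : Setoid G) (g : G) (F : Quotient (dualSetoid P) → ℂ) :
    ∑ᶠ ℓ, dualBlockSum P g ℓ * F ℓ = ∑ χ : AddChar G ℂ, χ g * F (Quotient.mk _ χ) := by
  simp only [dualBlockSum, finsum_eq_sum_of_fintype, Finset.sum_mul, ite_mul, zero_mul]
  rw [Finset.sum_comm]
  simp

lemma sum_apply_mul_blockSum (P : Setoid G) (g : G) (m : Quotient P) :
    ∑ χ : AddChar G ℂ, χ g * blockSum P χ m =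
      if Quotient.mk P (-g) = m then (Nat.card G : ℂ) else 0 := by
  calc ∑ χ : AddChar G ℂ, χ g * blockSum P χ m
      = ∑ h : G, if Quotient.mk P h = m then ∑ χ : AddChar G ℂ, χ (g + h) else 0 := by
        simp only [blockSum, Finset.mul_sum, mul_ite, mul_zero, ← AddChar.map_add_eq_mul]
        rw [Finset.sum_comm]
        simp only [Finset.sum_ite_irrel, Finset.sum_const_zero]
    _ = ∑ h : G, if h = -g then (if Quotient.mk P h = m then (Nat.card G : ℂ) else 0) else 0 := by
        refine Finset.sum_congr rfl fun h _ => ?_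
        rw [AddChar.sum_apply_eq_ite, Nat.card_eq_fintype_card, add_eq_zero_iff_eq_neg']
        split_ifs <;> simp
    _ = _ := by simp

/-- For a Fourier-reflexive partition `P` of `G`, with `K` the Krawtchouk matrix of
`(P, P̂)` and `K'` the Krawtchouk matrix of `(P̂, P̂̂ = P)`:  the negative `-P_r` of every
block of `P` is again a block of `P`, and `K'K = |G| · Π` where `Π` is the permutation
matrix with `Π_{r,m} = 1` exactly when `-P_r = P_m` (so after suitable reordering of the
blocks, `K'K = |G| · I`). -/
theorem reflexive_krawtchouk_orthogonality (P : Setoid G)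
    (hrefl : bidualSetoid P = P)
    (K : Quotient (dualSetoid P) → Quotient P → ℂ)
    (hK : ∀ (χ : AddChar G ℂ) (m : Quotient P),
      K (Quotient.mk (dualSetoid P) χ) m = blockSum P χ m)
    (K' : Quotient P → Quotient (dualSetoid P) → ℂ)
    (hK' : ∀ (g : G) (ℓ : Quotient (dualSetoid P)),
      K' (Quotient.mk P g) ℓ = dualBlockSum P g ℓ) :
    (∀ r : Quotient P, ∃ m : Quotient P,
      {x : G | ∃ g : G, Quotient.mk P g = r ∧ x = -g} = {x : G | Quotient.mk P x = m}) ∧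
    (∀ (r m : Quotient P),
      (∑ᶠ ℓ : Quotient (dualSetoid P), K' r ℓ * K ℓ m) =
        if {x : G | ∃ g : G, Quotient.mk P g = r ∧ x = -g} = {x : G | Quotient.mk P x = m}
        then (Nat.card G : ℂ) else 0) := by
  have hneg : ∀ {a b : G}, P a b → P (-a) (-b) := fun {a b} h => by
    rw [← hrefl] at h ⊢
    exact bidualSetoid_neg h
  refine ⟨fun r => ?_, fun r m => ?_⟩
  · obtain ⟨g, rfl⟩ := Quotient.exists_rep r
    exact ⟨_, neg_block_eq hneg g⟩
  · obtain ⟨g, rfl⟩ := Quotient.exists_rep r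
    simp only [hK', sum_dualBlockSum_mul, hK, sum_apply_mul_blockSum, neg_block_eq hneg,
      setOf_mk_eq_iff]
end

section
/- Let G_1, …, G_n be finite abelian groups and for each i let 𝒫_i be a partition of G_i having the singleton {0} as one of its blocks. Then the dual of the product partition 𝒫_1 × ⋯ × 𝒫_n of G_1 × ⋯ × G_n equals the product of the dual partitions: (𝒫_1 × ⋯ × 𝒫_n)̂ = 𝒫̂_1 × ⋯ × 𝒫̂_n (as partitions of Ĝ_1 × ⋯ × Ĝ_n). Consequently, if every 𝒫_i is Fourier-reflexive, then 𝒫_1 × ⋯ × 𝒫_n is Fourier-reflexive. -/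
/-! The block sum of a character `χ` of `∏ Gᵢ` over a product block `∏ Pᵢ` is the product of
the block sums of its components `χᵢ` over the `Pᵢ`. A block sum over the block `{0}` equals `1`,
so evaluating at product blocks that are `{0}` in every coordinate but the `i`-th isolates the
`i`-th factor; hence `χ ∼ χ'` iff `χᵢ ∼ χ'ᵢ` for every `i`. The dual partition has `{ε}` as a
block, because `Σ_G χ = 0` unless `χ = ε`. Since characters of the product are exactly tuples of
characters, the same argument one level up shows that the bidual of the product is the product
of the biduals. -/

open Finset
open scoped Classical

variable {G : Type*} [AddCommGroup G] [Fintype G]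

variable {ι : Type*} [Fintype ι] [DecidableEq ι]
  {H : ι → Type*} [∀ i, AddCommGroup (H i)] [∀ i, Fintype (H i)]

/-- The `i`-th component of a character of a product group, under the canonical
identification of the character group of a product with the product of the character
groups. -/
noncomputable def comp1 (χ : AddChar (∀ i, H i) ℂ) (i : ι) : AddChar (H i) ℂ :=
  χ.compAddMonoidHom (AddMonoidHom.single H i)

/-- The product partition `P₁ × ⋯ × Pₙ` of `G₁ × ⋯ × Gₙ`. -/
def prodSetoid (P : ∀ i, Setoid (H i)) : Setoid (∀ i, H i) where
  r x y := ∀ i, (P i).r (x i) (y i)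
  iseqv := ⟨fun x i => (P i).iseqv.refl (x i), fun h i => (P i).iseqv.symm (h i),
    fun h h' i => (P i).iseqv.trans (h i) (h' i)⟩


lemma AddChar.map_sum_eq_prod {A M κ : Type*} [AddCommMonoid A] [CommMonoid M]
    (χ : AddChar A M) (s : Finset κ) (f : κ → A) : χ (∑ i ∈ s, f i) = ∏ i ∈ s, χ (f i) :=
  map_prod χ.toMonoidHom (fun i => Multiplicative.ofAdd (f i)) s

lemma Fintype.forall_prod_eq_prod_iff {ι M : Type*} [Fintype ι] [DecidableEq ι]
    [CommMonoid M] {α : ι → Type*} {F F' : ∀ i, α i → M} (x₀ : ∀ i, α i)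
    (hF : ∀ i, F i (x₀ i) = 1) (hF' : ∀ i, F' i (x₀ i) = 1) :
    (∀ x : ∀ i, α i, ∏ i, F i (x i) = ∏ i, F' i (x i)) ↔ ∀ i, F i = F' i := by
  refine ⟨fun h i => funext fun a => ?_, fun h x => by simp only [h]⟩
  have h_single (G : ∀ i, α i → M) (hG : ∀ i, G i (x₀ i) = 1) :
      ∏ j, G j (Function.update x₀ i a j) = G i a := by
    rw [Fintype.prod_eq_single i fun j hj => by rw [Function.update_of_ne hj, hG],
      Function.update_self]
  rw [← h_single F hF, ← h_single F' hF', h]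

section ProductCharacters

variable {ι : Type*} [Fintype ι] {H : ι → Type*} [∀ i, AddCommGroup (H i)]

noncomputable def piChar (ψ : ∀ i, AddChar (H i) ℂ) : AddChar (∀ i, H i) ℂ :=
  ∏ i, (ψ i).compAddMonoidHom (Pi.evalAddMonoidHom H i)

lemma piChar_apply (ψ : ∀ i, AddChar (H i) ℂ) (g : ∀ i, H i) :
    piChar ψ g = ∏ i, ψ i (g i) := by
  simp [piChar, AddChar.prod_apply]

variable [DecidableEq ι]

lemma apply_eq_prod_comp1 (χ : AddChar (∀ i, H i) ℂ) (g : ∀ i, H i) :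
    χ g = ∏ i, comp1 χ i (g i) := by
  conv_lhs => rw [← Finset.univ_sum_single g]
  exact χ.map_sum_eq_prod _ _

lemma comp1_piChar (ψ : ∀ i, AddChar (H i) ℂ) (i : ι) : comp1 (piChar ψ) i = ψ i := by
  ext x
  change piChar ψ (Pi.single i x) = ψ i x
  rw [piChar_apply, Fintype.prod_eq_single i fun j hj => by
    rw [Pi.single_eq_of_ne hj, AddChar.map_zero_eq_one], Pi.single_eq_same]

lemma piChar_comp1 (χ : AddChar (∀ i, H i) ℂ) : piChar (comp1 χ) = χ := by
  ext g
  rw [piChar_apply, ← apply_eq_prod_comp1]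

noncomputable def piCharEquiv : (∀ i, AddChar (H i) ℂ) ≃ AddChar (∀ i, H i) ℂ where
  toFun := piChar
  invFun := comp1
  left_inv ψ := funext (comp1_piChar ψ)
  right_inv := piChar_comp1

end ProductCharacters

lemma dualSetoid_iff (P : Setoid G) {χ χ' : AddChar G ℂ} :
    (dualSetoid P).r χ χ' ↔ ∀ g, blockSum P χ ⟦g⟧ = blockSum P χ' ⟦g⟧ :=
  Setoid.ker_def.trans (funext_iff.trans Quotient.forall)

lemma blockSum_mk_zero {P : Setoid G} (h0 : ∀ g : G, P.r g 0 → g = 0) (χ : AddChar G ℂ) :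
    blockSum P χ ⟦0⟧ = 1 := by
  rw [blockSum, Finset.sum_eq_single 0 (fun g _ hg => if_neg fun h => hg (h0 g (Quotient.eq.mp h)))
    (fun h => absurd (mem_univ 0) h)]
  simp

lemma sum_blockSum (P : Setoid G) (χ : AddChar G ℂ) :
    ∑ c : Quotient P, blockSum P χ c = ∑ g : G, χ g := by
  simp only [blockSum]
  rw [Finset.sum_comm]
  simp

lemma eq_one_of_dualSetoid_one {P : Setoid G} {χ : AddChar G ℂ} (h : (dualSetoid P).r χ 1) :
    χ = 1 := by
  have hsum : ∑ g : G, χ g = ∑ g : G, (1 : AddChar G ℂ) g := by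
    rw [← sum_blockSum, ← sum_blockSum, Setoid.ker_def.mp h]
  by_contra hχ
  rw [AddChar.sum_eq_zero_iff_ne_zero.mpr hχ] at hsum
  simp only [AddChar.one_apply, Finset.sum_const, card_univ, nsmul_eq_mul, mul_one] at hsum
  exact Fintype.card_ne_zero (by exact_mod_cast hsum.symm)

lemma dualBlockSum_mk_one (P : Setoid G) (g : G) : dualBlockSum P g ⟦1⟧ = 1 := by
  rw [dualBlockSum, finsum_eq_sum_of_fintype, Finset.sum_eq_single 1
    (fun χ _ hχ => if_neg fun h => hχ (eq_one_of_dualSetoid_one (Quotient.eq.mp h)))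
    (fun h => absurd (mem_univ 1) h)]
  simp

lemma bidualSetoid_iff (P : Setoid G) {g g' : G} :
    (bidualSetoid P).r g g' ↔ ∀ χ, dualBlockSum P g ⟦χ⟧ = dualBlockSum P g' ⟦χ⟧ :=
  Setoid.ker_def.trans (funext_iff.trans Quotient.forall)

lemma blockSum_prodSetoid_mk (P : ∀ i, Setoid (H i)) (χ : AddChar (∀ i, H i) ℂ)
    (x : ∀ i, H i) :
    blockSum (prodSetoid P) χ ⟦x⟧ = ∏ i, blockSum (P i) (comp1 χ i) ⟦x i⟧ := by
  simp only [blockSum]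
  rw [Finset.prod_univ_sum, ← Fintype.piFinset_univ]
  refine Finset.sum_congr rfl fun g _ => ?_
  simp only [Finset.prod_ite_zero, mem_univ, true_imp_iff, Quotient.eq, ← apply_eq_prod_comp1]
  exact if_congr Iff.rfl rfl rfl

theorem dualSetoid_prodSetoid_iff {P : ∀ i, Setoid (H i)}
    (h0 : ∀ i (g : H i), (P i).r g 0 → g = 0) {χ χ' : AddChar (∀ i, H i) ℂ} :
    (dualSetoid (prodSetoid P)).r χ χ' ↔ ∀ i, (dualSetoid (P i)).r (comp1 χ i) (comp1 χ' i) := by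
  simp only [dualSetoid_iff, blockSum_prodSetoid_mk]
  refine (Fintype.forall_prod_eq_prod_iff (F := fun i x => blockSum (P i) (comp1 χ i) ⟦x⟧)
    (F' := fun i x => blockSum (P i) (comp1 χ' i) ⟦x⟧) 0 (fun i => blockSum_mk_zero (h0 i) _)
    (fun i => blockSum_mk_zero (h0 i) _)).trans ?_
  simp only [funext_iff]

lemma dualBlockSum_prodSetoid_mk {P : ∀ i, Setoid (H i)}
    (h0 : ∀ i (g : H i), (P i).r g 0 → g = 0) (g : ∀ i, H i) (χ : AddChar (∀ i, H i) ℂ) :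
    dualBlockSum (prodSetoid P) g ⟦χ⟧ = ∏ i, dualBlockSum (P i) (g i) ⟦comp1 χ i⟧ := by
  simp only [dualBlockSum, finsum_eq_sum_of_fintype]
  rw [Finset.prod_univ_sum, Fintype.piFinset_univ, ← piCharEquiv.sum_comp]
  refine Finset.sum_congr rfl fun ψ _ => ?_
  simp only [Finset.prod_ite_zero, mem_univ, true_imp_iff, Quotient.eq]
  change (if (dualSetoid (prodSetoid P)).r (piChar ψ) χ then piChar ψ g else 0) = _
  simp only [dualSetoid_prodSetoid_iff h0, comp1_piChar, piChar_apply]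

theorem bidualSetoid_prodSetoid {P : ∀ i, Setoid (H i)}
    (h0 : ∀ i (g : H i), (P i).r g 0 → g = 0) :
    bidualSetoid (prodSetoid P) = prodSetoid fun i => bidualSetoid (P i) := by
  ext g g'
  change _ ↔ ∀ i, (bidualSetoid (P i)).r (g i) (g' i)
  simp only [bidualSetoid_iff, dualBlockSum_prodSetoid_mk h0]
  rw [← piCharEquiv.forall_congr_right]
  simp only [piCharEquiv, Equiv.coe_fn_mk, comp1_piChar]
  refine (Fintype.forall_prod_eq_prod_iff (F := fun i ψ => dualBlockSum (P i) (g i) ⟦ψ⟧)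
    (F' := fun i ψ => dualBlockSum (P i) (g' i) ⟦ψ⟧) 1 (fun i => dualBlockSum_mk_one (P i) (g i))
    (fun i => dualBlockSum_mk_one (P i) (g' i))).trans ?_
  simp only [funext_iff]

/-- If each partition `P i` of `G i` has `{0}` as a block, then the dual of the product
partition is the product of the dual partitions (under the canonical identification of
the character group of the product with the product of the character groups);
consequently, if every `P i` is Fourier-reflexive, then so is the product partition. -/
theorem dual_prodSetoid (P : ∀ i, Setoid (H i))
    (h0 : ∀ i (g : H i), (P i).r g 0 → g = 0) :
    (∀ χ χ' : AddChar (∀ i, H i) ℂ,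
      (dualSetoid (prodSetoid P)).r χ χ' ↔
        (prodSetoid (fun i => dualSetoid (P i))).r (fun i => comp1 χ i) (fun i => comp1 χ' i)) ∧
    ((∀ i, bidualSetoid (P i) = P i) → bidualSetoid (prodSetoid P) = prodSetoid P) :=
  ⟨fun _ _ => dualSetoid_prodSetoid_iff h0,
    fun hbi => by rw [bidualSetoid_prodSetoid h0]; simp only [hbi]⟩
end

section
/- Let R be a finite commutative ring with identity admitting a generating character. Then for every submodule C ⊆ Rⁿ, the cardinalities satisfy |C| · |C^⊥⊥| = |R|ⁿ, where C^⊥⊥ = {v ∈ Rⁿ : v·a = 0 for all a ∈ C} is the dot-product dual. -/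
/-!
Pair `v ∈ Rⁿ` with `a ∈ C` through `χ(v ⬝ a)` and sum over both. Since a generating character
is primitive, the sum of `χ ∘ f` over a finite module vanishes unless the linear form `f` is zero.
Summing over `a ∈ C` first therefore gives `|C|` for each `v ∈ C^⊥⊥` and `0` otherwise, while
summing over `v` first leaves only `a = 0`, contributing `|R|ⁿ`.
-/

open Finset
open scoped Classical

variable {R : Type*} [CommRing R] [Fintype R]

/-- `χ` is a generating character of the finite commutative ring `R`:  the map `r ↦ r·χ`
(where `(r·χ)(a) = χ(r·a)`) is an `R`-module isomorphism from `R` to the character module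
`R̂` (bijective, additive, and compatible with the scalar multiplications). -/
def IsGeneratingChar (χ : AddChar R ℂ) : Prop :=
  Function.Bijective (fun r : R => χ.mulShift r) ∧
  (∀ r s : R, χ.mulShift (r + s) = χ.mulShift r * χ.mulShift s) ∧
  (∀ r s a : R, χ.mulShift (r * s) a = χ.mulShift s (r * a))

/-- The character `χ_v : a ↦ χ(v·a)` of `(Rⁿ, +)`, where `v·a = Σ_i v_i a_i` is the dot
product. -/
noncomputable def dotChar {n : ℕ} (χ : AddChar R ℂ) (v : Fin n → R) :
    AddChar (Fin n → R) ℂ :=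
  χ.compAddMonoidHom
    { toFun := fun a => ∑ i, v i * a i
      map_zero' := by simp
      map_add' := fun a b => by simp [mul_add, Finset.sum_add_distrib] }

/-- The dot-product dual `S^⊥⊥ = {v ∈ Rⁿ : v·a = 0 for all a ∈ S}` of a set `S ⊆ Rⁿ`. -/
def dotDual {n : ℕ} (S : Set (Fin n → R)) : Set (Fin n → R) :=
  {v : Fin n → R | ∀ a ∈ S, ∑ i, v i * a i = 0}

namespace AddChar

variable {R R' : Type*} [CommRing R] [CommRing R'] [IsDomain R'] {ψ : AddChar R R'}

theorem IsPrimitive.sum_comp_linearMap_eq_ite (hψ : ψ.IsPrimitive) {M : Type*} [AddCommGroup M]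
    [Module R M] [Fintype M] (f : M →ₗ[R] R) :
    ∑ m, ψ (f m) = if f = 0 then (Fintype.card M : R') else 0 := by
  by_cases hf : f = 0
  · simp [hf]
  rw [if_neg hf]
  obtain ⟨m, hm⟩ : ∃ m, f m ≠ 0 := by simpa [LinearMap.ext_iff] using hf
  obtain ⟨r, hr⟩ := ne_one_iff.1 (hψ hm)
  have hne : ψ.compAddMonoidHom f.toAddMonoidHom ≠ 0 :=
    ne_zero_iff.2 ⟨r • m, by simpa [mul_comm] using hr⟩
  simpa [hne] using (ψ.compAddMonoidHom f.toAddMonoidHom).sum_eq_ite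

variable [Fintype R] {ι : Type*} [Fintype ι]

theorem IsPrimitive.sum_dotProduct_eq_ite (hψ : ψ.IsPrimitive) (a : ι → R) :
    ∑ v : ι → R, ψ (v ⬝ᵥ a) = if a = 0 then (Fintype.card R ^ Fintype.card ι : R') else 0 := by
  simp_rw [dotProduct_comm _ a]
  simpa using hψ.sum_comp_linearMap_eq_ite (dotProductEquiv R ι a)

theorem IsPrimitive.sum_dotProduct_submodule_eq_ite (hψ : ψ.IsPrimitive)
    (C : Submodule R (ι → R)) (v : ι → R) :
    ∑ a : C, ψ (v ⬝ᵥ a) = if ∀ a ∈ C, v ⬝ᵥ a = 0 then (Fintype.card C : R') else 0 := by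
  simpa [LinearMap.ext_iff] using
    hψ.sum_comp_linearMap_eq_ite ((dotProductEquiv R ι v).domRestrict C)

theorem IsPrimitive.card_mul_card_dotProduct_orthogonal [CharZero R'] (hψ : ψ.IsPrimitive)
    (C : Submodule R (ι → R)) :
    Nat.card C * Nat.card {v : ι → R | ∀ a ∈ C, v ⬝ᵥ a = 0} = Nat.card R ^ Fintype.card ι := by
  have hdouble :=
    Finset.sum_comm (s := univ) (t := univ) (f := fun (v : ι → R) (a : C) => ψ (v ⬝ᵥ a))
  simp only [hψ.sum_dotProduct_submodule_eq_ite, hψ.sum_dotProduct_eq_ite,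
    Submodule.coe_eq_zero, sum_ite, sum_const_zero, add_zero, sum_const, nsmul_eq_mul, filter_eq',
    mem_univ, if_true, card_singleton, Nat.cast_one, one_mul] at hdouble
  rw [Nat.card_eq_fintype_card, Nat.card_eq_fintype_card, Nat.card_eq_fintype_card,
    Fintype.card_ofFinset, mul_comm, ← Nat.cast_inj (R := R')]
  push_cast
  exact hdouble

end AddChar

theorem IsGeneratingChar.isPrimitive {R : Type*} [CommRing R] {χ : AddChar R ℂ}
    (hχ : IsGeneratingChar χ) : χ.IsPrimitive :=
  fun _ ha h => ha (hχ.1.1 (h.trans χ.mulShift_zero.symm))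

/-- If the finite commutative ring `R` admits a generating character, then every
submodule `C ⊆ Rⁿ` satisfies `|C| · |C^⊥⊥| = |R|ⁿ`. -/
theorem card_mul_card_dotDual (n : ℕ) (hex : ∃ χ : AddChar R ℂ, IsGeneratingChar χ)
    (C : Submodule R (Fin n → R)) :
    Nat.card C * Nat.card (dotDual (C : Set (Fin n → R))) = Nat.card R ^ n := by
  obtain ⟨χ, hχ⟩ := hex
  have := hχ.isPrimitive.card_mul_card_dotProduct_orthogonal C
  rwa [Fintype.card_fin] at this
end
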